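/- arXiv:2006.13355 — 4 statements merged into one kernel-verified Lean document; each statement's English description precedes it below -/
import Mathlib

section
/- For any integers d ≥ 2 and Q ≥ 2 with d dividing Q, and any integer a with gcd(a, d) = 1, one has R*_Q(d; a) + R*_Q(d; −a) = 2 · R̄_Q(d), where R*_Q(d; −a) is attached to the residue class of −a modulo d. -/
/-- The least positive residue of `n` modulo `Q`: the unique integer in `[1, Q]`
congruent to `n` mod `Q` (for `Q ≥ 1`). -/
def lpr (Q : ℕ) (n : ℤ) : ℤ := (n - 1) % Q + 1

/-- `R*_Q(d;a) = (1/φ(Q)²) Σ_{s,t=1..Q, gcd(st,Q)=1, s ≡ a (mod d)} ⟨t-s⟩_Q`. -/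
def Rstar (Q d : ℕ) (a : ℤ) : ℚ :=
  (1 / (Nat.totient Q : ℚ) ^ 2) *
    ∑ s ∈ Finset.Icc 1 Q, ∑ t ∈ Finset.Icc 1 Q,
      if Nat.gcd (s * t) Q = 1 ∧ (s : ℤ) ≡ a [ZMOD d] then (lpr Q ((t : ℤ) - (s : ℤ)) : ℚ) else 0

/-- `R̄_Q(d) = (1/φ(d)) (Q/φ(Q)) (φ(Q)+1)/2`. -/
def Rbar (Q d : ℕ) : ℚ :=
  (1 / (Nat.totient d : ℚ)) * ((Q : ℚ) / (Nat.totient Q : ℚ)) * (((Nat.totient Q : ℚ) + 1) / 2)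


/-!
Writing both sums over the units of `ZMod Q`, the substitution `(s, t) ↦ (-s, -t)` turns the sum
for the class `-a` into the sum of `⟨s - t⟩_Q` over the class `a`. Since `⟨n⟩_Q + ⟨-n⟩_Q` is `Q`,
or `2Q` when `Q ∣ n`, the two sums together give `Q (φ(Q) + 1)` for each unit `s ≡ a (mod d)`.
There are `φ(Q) / φ(d)` of these, as they form a fibre of the surjective reduction
`(ZMod Q)ˣ →* (ZMod d)ˣ`.
-/

open Finset

lemma lpr_congr {Q : ℕ} {m n : ℤ} (h : m ≡ n [ZMOD Q]) : lpr Q m = lpr Q n :=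
  congrArg (· + 1) (h.sub_right 1)

lemma lpr_eq_lpr_val (Q : ℕ) [NeZero Q] (m : ℤ) : lpr Q m = lpr Q ((m : ZMod Q).val) :=
  lpr_congr <| (ZMod.intCast_eq_intCast_iff _ _ _).mp <| by simp

lemma lpr_val {Q : ℕ} [NeZero Q] (x : ZMod Q) : lpr Q x.val = if x = 0 then (Q : ℤ) else x.val := by
  have hlt : (x.val : ℤ) < Q := by exact_mod_cast x.val_lt
  unfold lpr
  split_ifs with hx
  · subst hx
    rw [ZMod.val_zero, Nat.cast_zero, zero_sub, ← Int.add_emod_right,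
      Int.emod_eq_of_lt (by omega) (by omega)]
    ring
  · have hpos : 0 < x.val := ZMod.val_pos.mpr hx
    rw [Int.emod_eq_of_lt (by omega) (by omega)]
    ring

lemma lpr_val_add_lpr_val_neg {Q : ℕ} [NeZero Q] (x : ZMod Q) :
    lpr Q x.val + lpr Q (-x).val = if x = 0 then 2 * (Q : ℤ) else Q := by
  rw [lpr_val x, lpr_val (-x), ZMod.neg_val]
  simp only [neg_eq_zero]
  split_ifs with hx
  · ring
  · rw [Nat.cast_sub x.val_lt.le]
    ring

lemma MonoidHom.card_mul_card_fiber_of_surjective {G H : Type*} [Group G] [Group H] [Fintype G]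
    [Fintype H] [DecidableEq H] (f : G →* H) (hf : Function.Surjective f) (y : H) :
    Fintype.card H * #{g | f g = y} = Fintype.card G := by
  calc Fintype.card H * #{g | f g = y} = ∑ z : H, #{g | f g = z} := by
        rw [sum_congr rfl fun z _ => card_fiber_eq_of_mem_range f (hf z) (hf y), sum_const,
          card_univ, smul_eq_mul]
    _ = Fintype.card G := (card_eq_sum_card_fiberwise fun g _ => mem_univ (f g)).symm

lemma sum_Icc_coprime_eq_sum_units {M : Type*} [AddCommMonoid M] {Q : ℕ} [NeZero Q]
    (hQ : Q ≠ 1) (g : ZMod Q → M) : ∑ s ∈ Icc 1 Q with s.Coprime Q, g s = ∑ u : (ZMod Q)ˣ, g u := by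
  have : Fact (1 < Q) := ⟨by have := NeZero.ne Q; omega⟩
  refine sum_bij' (fun s hs => ZMod.unitOfCoprime s (mem_filter.mp hs).2)
    (fun u _ => (u : ZMod Q).val) (fun _ _ => mem_univ _) ?_ ?_ ?_ ?_
  · intro u _
    simp only [mem_filter, mem_Icc]
    exact ⟨⟨ZMod.val_pos.mpr u.ne_zero, (ZMod.val_lt _).le⟩, ZMod.val_coe_unit_coprime u⟩
  · intro s hs
    simp only [mem_filter, mem_Icc] at hs
    have hsQ : s ≠ Q := by
      rintro rfl
      exact absurd hs.2 (by rw [Nat.coprime_self]; omega)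
    rw [ZMod.coe_unitOfCoprime, ZMod.val_natCast, Nat.mod_eq_of_lt (by omega)]
  · intro u _
    ext
    simp
  · intro s _
    rw [ZMod.coe_unitOfCoprime]

def unitsOfClass (Q d : ℕ) [NeZero Q] (c : ZMod d) : Finset (ZMod Q)ˣ :=
  {u | ((u : ZMod Q).cast : ZMod d) = c}

def classSum (Q d : ℕ) [NeZero Q] (c : ZMod d) : ℚ :=
  ∑ u ∈ unitsOfClass Q d c, ∑ v : (ZMod Q)ˣ, (lpr Q ((v : ZMod Q) - u).val : ℚ)

section ClassSums

variable {Q d : ℕ} [NeZero Q]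

lemma Rstar_eq_classSum (hQ : Q ≠ 1) (hdQ : d ∣ Q) (a : ℤ) :
    Rstar Q d a = 1 / (Q.totient : ℚ) ^ 2 * classSum Q d a := by
  let G (x y : ZMod Q) : ℚ := if (x.cast : ZMod d) = a then (lpr Q (y - x).val : ℚ) else 0
  have hterm (s t : ℕ) : (if Nat.gcd (s * t) Q = 1 ∧ (s : ℤ) ≡ a [ZMOD d] then
      (lpr Q ((t : ℤ) - (s : ℤ)) : ℚ) else 0) =
      if s.Coprime Q then (if t.Coprime Q then G s t else 0) else 0 := by
    have hcast : (s : ℤ) ≡ a [ZMOD d] ↔ ((s : ZMod Q).cast : ZMod d) = a := by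
      rw [ZMod.cast_natCast hdQ, ← ZMod.intCast_eq_intCast_iff, Int.cast_natCast]
    rw [lpr_eq_lpr_val]
    simp only [← Nat.coprime_iff_gcd_eq_one, Nat.coprime_mul_iff_left, hcast]
    push_cast
    simp only [ite_and, G]
  have hclass : classSum Q d a = ∑ u : (ZMod Q)ˣ, ∑ v : (ZMod Q)ˣ, G u v := by
    simp only [classSum, unitsOfClass, sum_filter, G, sum_ite_irrel, sum_const_zero]
  rw [Rstar, hclass]
  simp only [hterm, ← ite_sum_zero, ← sum_filter, sum_Icc_coprime_eq_sum_units hQ]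
  rw [sum_Icc_coprime_eq_sum_units hQ fun x => ∑ v : (ZMod Q)ˣ, G x v]

lemma classSum_neg (hdQ : d ∣ Q) (c : ZMod d) :
    classSum Q d (-c) = ∑ u ∈ unitsOfClass Q d c,
      ∑ v : (ZMod Q)ˣ, (lpr Q ((u : ZMod Q) - v).val : ℚ) := by
  refine sum_nbij' (fun u => -u) (fun u => -u) ?_ ?_ (fun u _ => neg_neg u) (fun u _ => neg_neg u)
    fun u _ => Fintype.sum_equiv (Equiv.neg _) _ _ fun v => ?_
  · intro u hu
    simpa [unitsOfClass, ZMod.cast_neg hdQ, neg_eq_iff_eq_neg] using hu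
  · intro u hu
    simpa [unitsOfClass, ZMod.cast_neg hdQ] using hu
  · simp only [Equiv.neg_apply, Units.val_neg, neg_sub_neg]

lemma sum_lpr_val_sub_add_lpr_val_sub (u : (ZMod Q)ˣ) :
    ∑ v : (ZMod Q)ˣ, ((lpr Q ((v : ZMod Q) - u).val : ℚ) + lpr Q ((u : ZMod Q) - v).val) =
      Q * (Q.totient + 1) := by
  have hterm : ∀ v : (ZMod Q)ˣ, ((lpr Q ((v : ZMod Q) - u).val : ℚ) +
      lpr Q ((u : ZMod Q) - v).val) = Q + if v = u then (Q : ℚ) else 0 := by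
    intro v
    rw [← neg_sub (v : ZMod Q) u, ← Int.cast_add, lpr_val_add_lpr_val_neg]
    simp only [sub_eq_zero, Units.val_inj]
    split_ifs <;> push_cast <;> ring
  rw [sum_congr rfl fun v _ => hterm v, sum_add_distrib, sum_const, card_univ,
    ZMod.card_units_eq_totient, sum_ite_eq', if_pos (mem_univ _), nsmul_eq_mul]
  ring

lemma classSum_add_classSum_neg (hdQ : d ∣ Q) (c : ZMod d) :
    classSum Q d c + classSum Q d (-c) =
      #(unitsOfClass Q d c) * (Q * (Q.totient + 1)) := by
  rw [classSum_neg hdQ, classSum, ← sum_add_distrib]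
  simp_rw [← sum_add_distrib, sum_lpr_val_sub_add_lpr_val_sub]
  rw [sum_const, nsmul_eq_mul]

lemma totient_mul_card_unitsOfClass (hdQ : d ∣ Q) {c : ZMod d} (hc : IsUnit c) :
    d.totient * #(unitsOfClass Q d c) = Q.totient := by
  have : NeZero d := ⟨fun h => NeZero.ne Q (Nat.eq_zero_of_zero_dvd (h ▸ hdQ))⟩
  have hfiber : unitsOfClass Q d c = ({u | ZMod.unitsMap hdQ u = hc.unit} : Finset _) := by
    ext u
    simp [unitsOfClass, Units.ext_iff, ZMod.unitsMap_val]
  rw [hfiber, ← ZMod.card_units_eq_totient, ← ZMod.card_units_eq_totient]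
  exact (ZMod.unitsMap hdQ).card_mul_card_fiber_of_surjective (ZMod.unitsMap_surjective hdQ) _

end ClassSums

theorem Rstar_add_Rstar_neg_general (d Q : ℕ) (hQ : 2 ≤ Q) (hdQ : d ∣ Q)
    (a : ℤ) (ha : Int.gcd a d = 1) :
    Rstar Q d a + Rstar Q d (-a) = 2 * Rbar Q d := by
  have : NeZero Q := ⟨by omega⟩
  have hunit : IsUnit (a : ZMod d) := by
    rwa [ZMod.coe_int_isUnit_iff_isCoprime, Int.isCoprime_iff_gcd_eq_one, Int.gcd_comm]
  have hcount : (d.totient : ℚ) * #(unitsOfClass Q d a) = Q.totient := by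
    exact_mod_cast totient_mul_card_unitsOfClass hdQ hunit
  have hφQ : (Q.totient : ℚ) ≠ 0 := by exact_mod_cast (Nat.totient_pos.mpr (by omega)).ne'
  have hφd : (d.totient : ℚ) ≠ 0 := by
    exact_mod_cast (Nat.totient_pos.mpr (Nat.pos_of_dvd_of_pos hdQ (by omega))).ne'
  rw [Rstar_eq_classSum (by omega) hdQ, Rstar_eq_classSum (by omega) hdQ, Int.cast_neg, ← mul_add,
    classSum_add_classSum_neg hdQ, Rbar]
  field_simp
  linear_combination hcount

/-- `R*_Q(d;a) + R*_Q(d;-a) = 2 R̄_Q(d)`. -/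
theorem Rstar_add_Rstar_neg (d Q : ℕ) (hd : 2 ≤ d) (hQ : 2 ≤ Q) (hdQ : d ∣ Q)
    (a : ℤ) (ha : Int.gcd a d = 1) :
    Rstar Q d a + Rstar Q d (-a) = 2 * Rbar Q d :=
  Rstar_add_Rstar_neg_general d Q hQ hdQ a ha
end

section
/- Let d ≥ 2 and Q ≥ 2 be integers with d dividing Q, and let a be an integer with gcd(a, d) = 1. Then R_Q(d; a + rad(Q)) = R_Q(d; a), where rad(Q) = ∏_{p | Q} p is the radical of Q. (Note that gcd(a + rad(Q), d) = 1, since rad(d) divides rad(Q).) -/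
/-- The bias constant `R_Q(d;a) = R*_Q(d;a) - R̄_Q(d)`. -/
def Rbias (Q d : ℕ) (a : ℤ) : ℚ := Rstar Q d a - Rbar Q d

/-- The radical (maximal square-free divisor) `rad(Q) = ∏_{p ∣ Q, p prime} p`. -/
def radical (d : ℕ) : ℕ := ∏ p ∈ d.primeFactors, p

/-!
Reading `s` and `t` as residues mod `Q`, the double sum defining `R*_Q(d;a)` runs over
`(ZMod Q)²`. The translation `(s, t) ↦ (s + rad Q, t + rad Q)` fixes `t - s`, turns the
condition `s ≡ a (mod d)` into `s ≡ a + rad Q (mod d)` because `d ∣ Q`, and preserves units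
of `ZMod Q` because `Q ∣ (rad Q)^Q` makes `rad Q` nilpotent there.
-/

lemma lpr_eq_of_modEq {Q : ℕ} {n m : ℤ} (h : n ≡ m [ZMOD Q]) : lpr Q n = lpr Q m := by
  unfold lpr
  rw [(h.sub_right 1 : (n - 1) % Q = (m - 1) % Q)]

lemma sum_Icc_natCast_eq_sum_zmod {M : Type*} [AddCommMonoid M] (Q : ℕ) [NeZero Q]
    (g : ZMod Q → M) : ∑ s ∈ Finset.Icc 1 Q, g s = ∑ x : ZMod Q, g x := by
  refine Finset.sum_nbij' (fun s => (s : ZMod Q)) (fun x => (x - 1).val + 1)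
    (fun _ _ => Finset.mem_univ _) (fun x _ => ?_) (fun s hs => ?_) (fun x _ => ?_) (fun _ _ => rfl)
  · simpa [Nat.succ_le_iff] using (x - 1).val_lt
  · obtain ⟨u, rfl⟩ : ∃ u, s = u + 1 := ⟨s - 1, by grind⟩
    have hu : u < Q := by grind
    simp [ZMod.val_natCast, Nat.mod_eq_of_lt hu]
  · simp

lemma IsNilpotent.isUnit_add_left_iff {R : Type*} [CommRing R] {n : R} (hn : IsNilpotent n)
    {x : R} : IsUnit (x + n) ↔ IsUnit x :=
  ⟨fun h => by simpa using hn.neg.isUnit_add_left_of_commute h (Commute.all _ _),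
    fun h => hn.isUnit_add_left_of_commute h (Commute.all _ _)⟩

lemma isNilpotent_natCast_radical (Q : ℕ) [NeZero Q] : IsNilpotent (radical Q : ZMod Q) :=
  ⟨Q, by
    rw [← Nat.cast_pow, ZMod.natCast_eq_zero_iff]
    exact Nat.dvd_prod_primeFactors_pow_self (NeZero.ne Q)⟩

open Classical in
noncomputable def residueSum (Q d : ℕ) [NeZero Q] (a : ZMod d) : ℚ :=
  ∑ x : ZMod Q, ∑ y : ZMod Q,
    if IsUnit x ∧ IsUnit y ∧ (x.cast : ZMod d) = a then (lpr Q (y - x).val : ℚ) else 0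

lemma Rstar_eq_residueSum {d Q : ℕ} [NeZero Q] (hdQ : d ∣ Q) (a : ℤ) :
    Rstar Q d a = 1 / (Nat.totient Q : ℚ) ^ 2 * residueSum Q d a := by
  unfold Rstar residueSum
  rw [← sum_Icc_natCast_eq_sum_zmod Q]
  refine congrArg _ (Finset.sum_congr rfl fun s _ => ?_)
  rw [← sum_Icc_natCast_eq_sum_zmod Q]
  refine Finset.sum_congr rfl fun t _ => ?_
  have hcond : (Nat.gcd (s * t) Q = 1 ∧ (s : ℤ) ≡ a [ZMOD d]) ↔
      (IsUnit (s : ZMod Q) ∧ IsUnit (t : ZMod Q) ∧ ((s : ZMod Q).cast : ZMod d) = a) := by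
    rw [ZMod.isUnit_iff_coprime, ZMod.isUnit_iff_coprime, ZMod.cast_natCast hdQ,
      ← Nat.coprime_iff_gcd_eq_one, Nat.coprime_mul_iff_left, ← ZMod.intCast_eq_intCast_iff,
      Int.cast_natCast, and_assoc]
  have hlpr : lpr Q ((t : ℤ) - s) = lpr Q ((t : ZMod Q) - s).val := by
    apply lpr_eq_of_modEq
    rw [← ZMod.intCast_eq_intCast_iff]
    simp
  simp only [hcond, hlpr]

lemma residueSum_add_cast_of_isNilpotent {d Q : ℕ} [NeZero Q] (hdQ : d ∣ Q) {c : ZMod Q}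
    (hc : IsNilpotent c) (a : ZMod d) : residueSum Q d (a + c.cast) = residueSum Q d a := by
  unfold residueSum
  refine (Fintype.sum_equiv (Equiv.addRight c) _ _ fun x => ?_).symm
  refine Fintype.sum_equiv (Equiv.addRight c) _ _ fun y => ?_
  simp only [Equiv.coe_addRight, hc.isUnit_add_left_iff, ZMod.cast_add hdQ, add_left_inj,
    add_sub_add_right_eq_sub]

theorem bias_add_radical_general (d Q : ℕ) (hQ : 2 ≤ Q) (hdQ : d ∣ Q) (a : ℤ) :
    Rbias Q d (a + (radical Q : ℤ)) = Rbias Q d a := by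
  have : NeZero Q := ⟨by omega⟩
  have hrad : ((radical Q : ℤ) : ZMod d) = ((radical Q : ZMod Q).cast : ZMod d) := by
    rw [Int.cast_natCast, ZMod.cast_natCast hdQ]
  unfold Rbias
  rw [Rstar_eq_residueSum hdQ, Rstar_eq_residueSum hdQ, Int.cast_add, hrad,
    residueSum_add_cast_of_isNilpotent hdQ (isNilpotent_natCast_radical Q)]

/-- `R_Q(d; a + rad Q) = R_Q(d; a)`. -/
theorem bias_add_radical (d Q : ℕ) (hd : 2 ≤ d) (hQ : 2 ≤ Q) (hdQ : d ∣ Q)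
    (a : ℤ) (ha : Int.gcd a d = 1) :
    Rbias Q d (a + (radical Q : ℤ)) = Rbias Q d a :=
  bias_add_radical_general d Q hQ hdQ a
end

section
/- Let d ≥ 2 be a prime, let a be an integer with gcd(a, d) = 1, let T ≥ 1 be a real number, and set Q_T = d · ∏_{p ≤ T, p prime, p ≡ 1 (mod d)} p. Then R_{Q_T}(d; a) = (∏_{p ≤ T, p prime, p ≡ 1 (mod d)} p/(p − 1)) · R_d(d; a). -/
open Finset ZMod

namespace ZMod

def posRep (N : ℕ) (x : ZMod N) : ℕ := (x - 1).val + 1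

variable {N : ℕ}

theorem one_le_posRep (x : ZMod N) : 1 ≤ posRep N x := Nat.le_add_left 1 _

theorem posRep_le [NeZero N] (x : ZMod N) : posRep N x ≤ N := (x - 1).val_lt

theorem posRep_natCast {k : ℕ} (h1 : 1 ≤ k) (h2 : k ≤ N) : posRep N k = k := by
  have hk : ((k : ZMod N) - 1) = ((k - 1 : ℕ) : ZMod N) := by rw [Nat.cast_sub h1, Nat.cast_one]
  rw [posRep, hk, val_cast_of_lt (by omega)]
  omega

@[simp]
theorem natCast_posRep [NeZero N] (x : ZMod N) : (posRep N x : ZMod N) = x := by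
  simp [posRep]

theorem lpr_eq_posRep [NeZero N] (n : ℤ) : lpr N n = posRep N n := by
  have h : ((n : ZMod N) - 1) = ((n - 1 : ℤ) : ZMod N) := by push_cast; rfl
  rw [lpr, posRep, h, Nat.cast_add, val_intCast, Nat.cast_one]

theorem sum_range_natCast {M : Type*} [AddCommMonoid M] [NeZero N] (H : ZMod N → M) :
    ∑ j ∈ range N, H j = ∑ x, H x :=
  sum_nbij' Nat.cast val (by simp) (fun x _ => by simp [val_lt])
    (fun j hj => val_cast_of_lt (mem_range.1 hj)) (fun x _ => natCast_zmod_val x) (fun _ _ => rfl)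

theorem sum_Icc_natCast {M : Type*} [AddCommMonoid M] [NeZero N] (H : ZMod N → M) :
    ∑ s ∈ Icc 1 N, H s = ∑ x, H x :=
  sum_nbij' Nat.cast (posRep N) (by simp) (fun x _ => by simp [one_le_posRep, posRep_le])
    (fun s hs => posRep_natCast (mem_Icc.1 hs).1 (mem_Icc.1 hs).2) (fun x _ => natCast_posRep x)
    (fun _ _ => rfl)

theorem chineseRemainder_apply {m n : ℕ} (h : m.Coprime n) (y : ZMod (m * n)) :
    chineseRemainder h y = (y.cast, y.cast) :=
  congrArg (· y) <| RingHom.ext_zmod (chineseRemainder h).toRingHom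
    ((castHom (dvd_mul_right m n) (ZMod m)).prod (castHom (dvd_mul_left n m) (ZMod n)))

end ZMod

theorem Fintype.sum_ite_isUnit {R M : Type*} [Monoid R] [Fintype R] [Fintype Rˣ] [AddCommMonoid M]
    [DecidablePred (IsUnit : R → Prop)] (f : R → M) :
    ∑ x, (if IsUnit x then f x else 0) = ∑ u : Rˣ, f u := by
  have hunits : ({x | IsUnit x} : Finset R) = univ.map ⟨Units.val, Units.val_injective⟩ := by
    ext x; simp only [mem_filter, mem_univ, true_and, mem_map, Function.Embedding.coeFn_mk]; rfl
  rw [← sum_filter, hunits, sum_map]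
  rfl


theorem Fintype.sum_ite_eq_zero_eq_sub {α M : Type*} [Fintype α] [DecidableEq α] [AddCommGroup M]
    (a : α) (f : α → M) : ∑ x, (if x = a then 0 else f x) = ∑ x, f x - f a := by
  have h : ∀ x, (if x = a then 0 else f x) = f x - if x = a then f x else 0 := by
    intro x; split_ifs <;> simp
  simp only [h, sum_sub_distrib, sum_ite_eq']

theorem Fintype.sum_sum_ite_ne_zero {A R : Type*} [AddCommGroup A] [Fintype A] [DecidableEq A]
    [CommRing R] (H : A → R) :
    ∑ s, ∑ t, (if s = 0 then 0 else if t = 0 then 0 else H (t - s)) =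
      (Fintype.card A - 2) * ∑ u, H u + H 0 := by
  have inner : ∀ s, ∑ t, (if s = 0 then 0 else if t = 0 then 0 else H (t - s)) =
      if s = 0 then 0 else ∑ u, H u - H (-s) := by
    intro s
    split_ifs
    · simp
    · rw [sum_ite_eq_zero_eq_sub, zero_sub,
        Fintype.sum_equiv (Equiv.subRight s) (fun t => H (t - s)) H fun _ => rfl]
  simp only [inner, sum_ite_eq_zero_eq_sub, sum_sub_distrib,
    Fintype.sum_equiv (Equiv.neg A) (fun s => H (-s)) H fun _ => rfl, neg_zero, sum_const,
    card_univ, nsmul_eq_mul]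
  ring

def posRepSum (N : ℕ) [NeZero N] (F G : ZMod N → ℚ) : ℚ :=
  ∑ s, ∑ t, F s * G t * posRep N (t - s)

def unitWeight (N : ℕ) [NeZero N] (x : ZMod N) : ℚ := if IsUnit x then 1 else 0

def classWeight (N d : ℕ) [NeZero N] (a : ℤ) (x : ZMod N) : ℚ :=
  if IsUnit x ∧ (x.cast : ZMod d) = a then 1 else 0

theorem Rstar_eq_posRepSum {Q d : ℕ} [NeZero Q] (hdQ : d ∣ Q) (a : ℤ) :
    Rstar Q d a = posRepSum Q (classWeight Q d a) (unitWeight Q) / (Nat.totient Q : ℚ) ^ 2 := by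
  have summand : ∀ s t : ℕ,
      (if Nat.gcd (s * t) Q = 1 ∧ (s : ℤ) ≡ a [ZMOD d] then
        (lpr Q ((t : ℤ) - (s : ℤ)) : ℚ) else 0) =
        classWeight Q d a s * unitWeight Q t * posRep Q (t - s) := by
    intro s t
    have hcong : (s : ℤ) ≡ a [ZMOD d] ↔ ((s : ZMod Q).cast : ZMod d) = a := by
      rw [cast_natCast hdQ, ← intCast_eq_intCast_iff, Int.cast_natCast]
    have hlpr : (lpr Q ((t : ℤ) - (s : ℤ)) : ℚ) = posRep Q (t - s) := by
      rw [lpr_eq_posRep]; push_cast; rfl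
    simp only [classWeight, unitWeight, isUnit_iff_coprime, Nat.coprime_mul_iff_left, hcong, hlpr]
    split_ifs <;> simp_all
  simp only [Rstar, summand, posRepSum, one_div, inv_mul_eq_div]
  rw [sum_Icc_natCast fun x =>
    ∑ t ∈ Icc 1 Q, classWeight Q d a x * unitWeight Q t * posRep Q (t - x)]
  exact congrArg (· / _) <| sum_congr rfl fun x _ =>
    sum_Icc_natCast fun y => classWeight Q d a x * unitWeight Q y * posRep Q (y - x)

theorem sum_unitWeight (N : ℕ) [NeZero N] : ∑ x, unitWeight N x = Nat.totient N := by
  simp only [unitWeight]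
  rw [Fintype.sum_ite_isUnit]
  simp [card_units_eq_totient]

theorem sum_classWeight_mul_totient {Q d : ℕ} [NeZero Q] (hdQ : d ∣ Q) {a : ℤ}
    (ha : IsUnit (a : ZMod d)) :
    (∑ x, classWeight Q d a x) * Nat.totient d = Nat.totient Q := by
  have : NeZero d := ⟨ne_zero_of_dvd_ne_zero (NeZero.ne Q) hdQ⟩
  have hsum : ∑ x, classWeight Q d a x = #{u | unitsMap hdQ u = ha.unit} := by
    simp only [classWeight, ite_and, Fintype.sum_ite_isUnit, sum_boole, Units.ext_iff,
      IsUnit.unit_spec]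
    rfl
  have hfiber : ∀ b, #{u | unitsMap hdQ u = b} = #{u | unitsMap hdQ u = ha.unit} := fun b =>
    MonoidHom.card_fiber_eq_of_mem_range _ (unitsMap_surjective hdQ b) (unitsMap_surjective hdQ _)
  have hcard := card_eq_sum_card_fiberwise (f := unitsMap hdQ) (s := univ) (t := univ)
    (fun _ _ => mem_coe.2 (mem_univ _))
  simp only [hfiber, sum_const, card_univ, card_units_eq_totient, smul_eq_mul] at hcard
  rw [hsum, ← Nat.cast_mul, mul_comm, ← hcard]

theorem unitWeight_natCast_mul {N p : ℕ} [NeZero N] (h : p.Coprime N) (x : ZMod N) :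
    unitWeight N (p * x) = unitWeight N x := by
  simp only [unitWeight, ← coe_unitOfCoprime p h, Units.isUnit_units_mul]

theorem classWeight_natCast_mul {N d p : ℕ} [NeZero N] (hdN : d ∣ N) (h : p.Coprime N)
    (hpd : (p : ZMod d) = 1) (a : ℤ) (x : ZMod N) :
    classWeight N d a (p * x) = classWeight N d a x := by
  simp only [classWeight, cast_mul hdN, cast_natCast hdN, hpd, one_mul]
  simp only [← coe_unitOfCoprime p h, Units.isUnit_units_mul]

theorem sum_sum_posRep_mul_units_inv {N : ℕ} [NeZero N] (u : (ZMod N)ˣ) {F G : ZMod N → ℚ}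
    (hF : ∀ x, F (u * x) = F x) (hG : ∀ x, G (u * x) = G x) :
    ∑ s, ∑ t, F s * G t * posRep N ((t - s) * ↑u⁻¹) = posRepSum N F G := by
  rw [← Fintype.sum_equiv (Units.mulLeft u)
    (fun s => ∑ t, F (u * s) * G t * posRep N ((t - u * s) * ↑u⁻¹)) _ fun _ => rfl]
  refine sum_congr rfl fun s _ => ?_
  rw [← Fintype.sum_equiv (Units.mulLeft u)
    (fun t => F (u * s) * G (u * t) * posRep N ((u * t - u * s) * ↑u⁻¹)) _ fun _ => rfl]
  refine sum_congr rfl fun t _ => ?_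
  rw [hF, hG, ← mul_sub, mul_comm (u : ZMod N), Units.mul_inv_cancel_right]

section SieveLift

variable {Q p : ℕ} (h : Q.Coprime p)

def sieveLift (F : ZMod Q → ℚ) (y : ZMod (Q * p)) : ℚ :=
  if (chineseRemainder h y).2 = 0 then 0 else F (chineseRemainder h y).1

@[simp]
theorem sieveLift_chineseRemainder_symm (F : ZMod Q → ℚ) (x : ZMod Q) (u : ZMod p) :
    sieveLift h F ((chineseRemainder h).symm (x, u)) = if u = 0 then 0 else F x := by
  simp [sieveLift]

theorem isUnit_iff_chineseRemainder (hp : p.Prime) (y : ZMod (Q * p)) :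
    IsUnit y ↔ IsUnit (chineseRemainder h y).1 ∧ (chineseRemainder h y).2 ≠ 0 := by
  have := Fact.mk hp
  rw [← isUnit_map_iff (chineseRemainder h) y, Prod.isUnit_iff, isUnit_iff_ne_zero]

variable [NeZero Q] [NeZero p]

theorem sieveLift_unitWeight (hp : p.Prime) : sieveLift h (unitWeight Q) = unitWeight (Q * p) := by
  funext y
  simp only [sieveLift, unitWeight, isUnit_iff_chineseRemainder h hp y]
  split_ifs <;> simp_all

theorem sieveLift_classWeight (hp : p.Prime) {d : ℕ} (hdQ : d ∣ Q) (a : ℤ) :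
    sieveLift h (classWeight Q d a) = classWeight (Q * p) d a := by
  have hcast (y : ZMod (Q * p)) : ((chineseRemainder h y).1.cast : ZMod d) = y.cast := by
    rw [chineseRemainder_apply]
    exact congrArg (· y) <| RingHom.ext_zmod
      ((castHom hdQ (ZMod d)).comp (castHom (dvd_mul_right Q p) (ZMod Q)))
      (castHom (dvd_mul_of_dvd_left hdQ p) (ZMod d))
  funext y
  simp only [sieveLift, classWeight, isUnit_iff_chineseRemainder h hp y, ← hcast y]
  split_ifs <;> simp_all

theorem sum_chineseRemainder_symm {M : Type*} [AddCommMonoid M] (H : ZMod (Q * p) → M) :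
    ∑ y, H y = ∑ x, ∑ u, H ((chineseRemainder h).symm (x, u)) := by
  rw [← Fintype.sum_prod_type']
  exact (Fintype.sum_equiv (chineseRemainder h).symm.toEquiv _ _ fun _ => rfl).symm

theorem sum_posRep_chineseRemainder_symm (x : ZMod Q) :
    ∑ u, (posRep (Q * p) ((chineseRemainder h).symm (x, u)) : ℚ) =
      p * posRep Q x + Q * (p * (p - 1) / 2) := by
  set r := posRep Q x
  have hlift : ∀ j : ℕ,
      (chineseRemainder h).symm (x, r + Q * j) = ((r + Q * j : ℕ) : ZMod (Q * p)) := by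
    intro j
    rw [RingEquiv.symm_apply_eq, map_natCast]
    ext <;> simp [r]
  have hrep : ∀ j < p, posRep (Q * p) ((r + Q * j : ℕ)) = r + Q * j := fun j hj =>
    posRep_natCast (by have := one_le_posRep x; omega)
      (by nlinarith [posRep_le x, Nat.mul_le_mul_left Q (Nat.succ_le_of_lt hj)])
  have gauss : ∑ j ∈ range p, (j : ℚ) = p * (p - 1) / 2 := by
    rw [eq_div_iff two_ne_zero, ← Nat.cast_sum, ← Nat.cast_ofNat, ← Nat.cast_mul,
      sum_range_id_mul_two, Nat.cast_mul, Nat.cast_pred (NeZero.pos p)]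
  calc ∑ u, (posRep (Q * p) ((chineseRemainder h).symm (x, u)) : ℚ)
      = ∑ j, (posRep (Q * p) ((chineseRemainder h).symm (x, r + Q * j)) : ℚ) :=
        (((Units.mulLeft (unitOfCoprime Q h)).trans (Equiv.addLeft (r : ZMod p))).sum_comp _).symm
    _ = ∑ j ∈ range p, ((r + Q * j : ℕ) : ℚ) := by
        rw [← sum_range_natCast]
        refine sum_congr rfl fun j hj => ?_
        rw [hlift, hrep j (mem_range.1 hj)]
    _ = p * r + Q * (p * (p - 1) / 2) := by
        push_cast
        rw [sum_add_distrib, ← mul_sum, gauss]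
        simp

theorem posRep_chineseRemainder_symm_zero (x : ZMod Q) :
    posRep (Q * p) ((chineseRemainder h).symm (x, 0)) =
      p * posRep Q (x * ↑(unitOfCoprime p h.symm)⁻¹) := by
  have hlift : (chineseRemainder h).symm (x, 0) =
      ((p * posRep Q (x * ↑(unitOfCoprime p h.symm)⁻¹) : ℕ) : ZMod (Q * p)) := by
    rw [RingEquiv.symm_apply_eq, map_natCast]
    ext
    · rw [Prod.fst_natCast, Nat.cast_mul, natCast_posRep, ← coe_unitOfCoprime p h.symm,
        mul_left_comm, Units.mul_inv, mul_one]
    · simp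
  rw [hlift, posRep_natCast (Nat.mul_pos (NeZero.pos p) (one_le_posRep _))
    (by rw [mul_comm Q]; exact Nat.mul_le_mul_left p (posRep_le _))]

theorem posRepSum_sieveLift_eq_sum (F G : ZMod Q → ℚ) :
    posRepSum (Q * p) (sieveLift h F) (sieveLift h G) =
      ∑ s, ∑ t, F s * G t * ∑ s', ∑ t', (if s' = 0 then 0 else if t' = 0 then 0 else
        (posRep (Q * p) ((chineseRemainder h).symm (t - s, t' - s')) : ℚ)) := by
  rw [posRepSum, sum_chineseRemainder_symm h]
  refine sum_congr rfl fun s _ => ?_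
  rw [sum_congr rfl fun s' _ => sum_chineseRemainder_symm h fun y =>
    sieveLift h F ((chineseRemainder h).symm (s, s')) * sieveLift h G y *
      posRep (Q * p) (y - (chineseRemainder h).symm (s, s')), sum_comm]
  refine sum_congr rfl fun t _ => ?_
  rw [mul_sum]
  refine sum_congr rfl fun s' _ => ?_
  rw [mul_sum]
  refine sum_congr rfl fun t' _ => ?_
  rw [sieveLift_chineseRemainder_symm, sieveLift_chineseRemainder_symm, ← map_sub, Prod.mk_sub_mk]
  split_ifs <;> ring

theorem posRepSum_sieveLift {F G : ZMod Q → ℚ} (hF : ∀ x, F (p * x) = F x)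
    (hG : ∀ x, G (p * x) = G x) :
    posRepSum (Q * p) (sieveLift h F) (sieveLift h G) =
      p * (p - 1) * posRepSum Q F G +
        (p - 2) * (Q * (p * (p - 1) / 2)) * ((∑ x, F x) * ∑ x, G x) := by
  set u := unitOfCoprime p h.symm
  have hpair : ∀ x : ZMod Q, ∑ s, ∑ t, (if s = 0 then 0 else if t = 0 then 0 else
      (posRep (Q * p) ((chineseRemainder h).symm (x, t - s)) : ℚ)) =
        (p - 2) * (p * posRep Q x + Q * (p * (p - 1) / 2)) + p * posRep Q (x * ↑u⁻¹) := by
    intro x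
    rw [Fintype.sum_sum_ite_ne_zero fun v =>
        (posRep (Q * p) ((chineseRemainder h).symm (x, v)) : ℚ), ZMod.card,
      sum_posRep_chineseRemainder_symm, posRep_chineseRemainder_symm_zero, Nat.cast_mul]
  calc posRepSum (Q * p) (sieveLift h F) (sieveLift h G)
      = ∑ s, ∑ t, F s * G t * ((p - 2) * (p * posRep Q (t - s) + Q * (p * (p - 1) / 2)) +
          p * posRep Q ((t - s) * ↑u⁻¹)) := by
        simp only [posRepSum_sieveLift_eq_sum, hpair]
    _ = (p - 2) * p * posRepSum Q F G +
          (p - 2) * (Q * (p * (p - 1) / 2)) * ((∑ x, F x) * ∑ x, G x) +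
          p * ∑ s, ∑ t, F s * G t * posRep Q ((t - s) * ↑u⁻¹) := by
        rw [posRepSum, sum_mul_sum]
        simp only [mul_sum, ← sum_add_distrib]
        exact sum_congr rfl fun s _ => sum_congr rfl fun t _ => by ring
    _ = _ := by
        rw [sum_sum_posRep_mul_units_inv (F := F) (G := G) u hF hG]
        ring

end SieveLift

theorem Rbias_mul_prime {Q d p : ℕ} [NeZero Q] (hdQ : d ∣ Q) {a : ℤ}
    (ha : IsUnit (a : ZMod d)) (hp : p.Prime) (h : Q.Coprime p) (hpd : (p : ZMod d) = 1) :
    Rbias (Q * p) d a = p / (p - 1) * Rbias Q d a := by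
  have : NeZero p := ⟨hp.ne_zero⟩
  have hS := posRepSum_sieveLift h (classWeight_natCast_mul hdQ h.symm hpd a)
    (unitWeight_natCast_mul h.symm)
  rw [sieveLift_classWeight h hp hdQ, sieveLift_unitWeight h hp, sum_unitWeight] at hS
  have hA := sum_classWeight_mul_totient hdQ ha
  have hφd : (Nat.totient d : ℚ) ≠ 0 := by
    have : NeZero d := ⟨ne_zero_of_dvd_ne_zero (NeZero.ne Q) hdQ⟩
    exact_mod_cast (Nat.totient_pos.2 (NeZero.pos d)).ne'
  have hφQ : (Nat.totient Q : ℚ) ≠ 0 := by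
    exact_mod_cast (Nat.totient_pos.2 (NeZero.pos Q)).ne'
  have hp1 : (p : ℚ) - 1 ≠ 0 := sub_ne_zero.2 (by exact_mod_cast hp.one_lt.ne')
  rw [← eq_div_iff hφd] at hA
  rw [Rbias, Rbias, Rstar_eq_posRepSum (dvd_mul_of_dvd_left hdQ p), Rstar_eq_posRepSum hdQ, hS, hA,
    Rbar, Rbar, Nat.totient_mul h, Nat.totient_prime hp]
  push_cast [Nat.cast_pred hp.pos]
  field_simp
  ring

theorem Rbias_mul_prod {d : ℕ} {a : ℤ} (ha : IsUnit (a : ZMod d)) (P : Finset ℕ)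
    (hP : ∀ p ∈ P, p.Prime ∧ p % d = 1) :
    Rbias (d * ∏ p ∈ P, p) d a = (∏ p ∈ P, (p : ℚ) / (p - 1)) * Rbias d d a := by
  induction P using Finset.induction_on with
  | empty => simp
  | insert p P hpP ih =>
    obtain ⟨hp, hpd⟩ := hP p (mem_insert_self p P)
    have hP' : ∀ q ∈ P, q.Prime ∧ q % d = 1 := fun q hq => hP q (mem_insert_of_mem hq)
    have hd : d ≠ 0 := by
      rintro rfl
      exact hp.one_lt.ne' (by simpa using hpd)
    have : NeZero (d * ∏ q ∈ P, q) :=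
      ⟨mul_ne_zero hd (prod_ne_zero_iff.2 fun q hq => (hP' q hq).1.ne_zero)⟩
    have hdp : d.Coprime p := by rw [Nat.Coprime, Nat.gcd_rec, hpd, Nat.gcd_one_left]
    have hcop : (d * ∏ q ∈ P, q).Coprime p := Nat.Coprime.mul_left hdp <|
      Nat.Coprime.prod_left fun q hq =>
        (Nat.coprime_primes (hP' q hq).1 hp).2 (ne_of_mem_of_not_mem hq hpP)
    rw [prod_insert hpP, prod_insert hpP, mul_left_comm, mul_comm,
      Rbias_mul_prime (dvd_mul_right d _) ha hp hcop (by rw [← natCast_mod, hpd, Nat.cast_one]),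
      ih hP']
    ring

theorem bias_primorial_sieve_general (d : ℕ) (a : ℤ) (ha : Int.gcd a d = 1)
    (T : ℝ) :
    Rbias (d * ∏ p ∈ (Finset.range (⌊T⌋₊ + 1)).filter
        (fun (p : ℕ) => p.Prime ∧ (p : ℝ) ≤ T ∧ p % d = 1), p) d a =
      (∏ p ∈ (Finset.range (⌊T⌋₊ + 1)).filter
        (fun (p : ℕ) => p.Prime ∧ (p : ℝ) ≤ T ∧ p % d = 1), ((p : ℚ) / ((p : ℚ) - 1))) *
      Rbias d d a := by
  have ha' : IsUnit (a : ZMod d) := by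
    rw [coe_int_isUnit_iff_isCoprime, Int.isCoprime_iff_gcd_eq_one, Int.gcd_comm, ha]
  exact Rbias_mul_prod ha' _ fun p hp => ⟨(mem_filter.1 hp).2.1, (mem_filter.1 hp).2.2.2⟩

/-- For prime `d` and `Q_T = d · ∏_{p ≤ T, p prime, p ≡ 1 (mod d)} p`, one has
`R_{Q_T}(d;a) = (∏_{p ≤ T, p prime, p ≡ 1 (mod d)} p/(p-1)) · R_d(d;a)`. -/
theorem bias_primorial_sieve (d : ℕ) (hd : d.Prime) (a : ℤ) (ha : Int.gcd a d = 1)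
    (T : ℝ) (hT : 1 ≤ T) :
    Rbias (d * ∏ p ∈ (Finset.range (⌊T⌋₊ + 1)).filter
        (fun (p : ℕ) => p.Prime ∧ (p : ℝ) ≤ T ∧ p % d = 1), p) d a =
      (∏ p ∈ (Finset.range (⌊T⌋₊ + 1)).filter
        (fun (p : ℕ) => p.Prime ∧ (p : ℝ) ≤ T ∧ p % d = 1), ((p : ℚ) / ((p : ℚ) - 1))) *
      Rbias d d a :=
  bias_primorial_sieve_general d a ha T
end

section
/- Fix an integer Q ≥ 2, a real constant c > 0, and an integer m ≥ 1. For n large enough that the series converges, define H₂^m(n) = Σ_{k ≥ 2} ((u_{n+k} − u_n)^m / log u_{n+k}) · [∏_{j=1}^{k−1} (1 − c/log u_{n+j}) − (1 − c/log u_n)^{k−1}]. Then for every ε > 0, H₂^m(n) = O((log n)^{m+ε}/n) as n → ∞. -/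
/-- `useq Q n` is `u_n`, the `n`-th positive integer coprime to `Q`
(increasing enumeration, `u₁ = 1`). -/
noncomputable def useq (Q : ℕ) (n : ℕ) : ℕ :=
  Nat.nth (fun m => 0 < m ∧ Nat.Coprime m Q) (n - 1)

/-- `H₂^m(n) = Σ_{k ≥ 2} ((u_{n+k} - u_n)^m / log u_{n+k})
      [∏_{j=1}^{k-1} (1 - c/log u_{n+j}) - (1 - c/log u_n)^{k-1}]`. -/
noncomputable def H2 (Q : ℕ) (c : ℝ) (m : ℕ) (n : ℕ) : ℝ :=
  ∑' k : ℕ,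
    (((useq Q (n + (k + 2)) : ℝ) - (useq Q n : ℝ)) ^ m / Real.log (useq Q (n + (k + 2)))) *
      (∏ j ∈ Finset.Icc 1 (k + 1), (1 - c / Real.log (useq Q (n + j))) -
        (1 - c / Real.log (useq Q n)) ^ (k + 1))

/-!
Write `a_j = 1 - c / log u_{n+j}`. From `n ≤ u_n ≤ Q n` and `u_{n+j} ≤ u_n + Q j`, the increments
`a_j - a_0` are at most `c Q j / (n log² n)`, so telescoping the bracket of the `k`-th summand
bounds that summand by `O(k^{m+2} a_{k-1}^{k-2} / (n log³ n))`. For `k ≤ n`, `a_{k-1}` is at most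
`ρ = 1 - c / (2 log n)` and `∑ k^{m+2} ρ^k = O((1 - ρ)^{-(m+3)}) = O(log^{m+3} n)`; for `k > n`,
`a_{k-1}^{k-2}` is essentially `exp (-c k / log (3 Q k))`, and the weighted series of these
converges because `log² x = o(x)`. Hence `H₂^m(n) = O(log^m n / n)`.
-/

open Filter Finset Asymptotics
open scoped Nat

section useq

variable {Q : ℕ}

theorem setOf_pos_coprime_infinite (hQ : 0 < Q) :
    {m : ℕ | 0 < m ∧ m.Coprime Q}.Infinite := by
  refine Set.infinite_of_injective_forall_mem (f := fun n => n * Q + 1) (fun a b h => ?_)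
    fun n => ⟨Nat.succ_pos _, ?_⟩
  · simpa [hQ.ne'] using h
  · simp

theorem useq_monotone (hQ : 0 < Q) : Monotone (useq Q) := fun _ _ h =>
  Nat.nth_monotone (setOf_pos_coprime_infinite hQ) (Nat.sub_le_sub_right h 1)

theorem le_useq (hQ : 0 < Q) (n : ℕ) : n ≤ useq Q n := by
  obtain _ | i := n
  · exact Nat.zero_le _
  · have hpos := (Nat.nth_mem_of_infinite (setOf_pos_coprime_infinite hQ) 0).1
    have := (Nat.nth_strictMono (setOf_pos_coprime_infinite hQ)).add_le_nat i 0
    simp only [useq, add_tsub_cancel_right, add_zero] at this ⊢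
    omega

theorem useq_one_le : useq Q 1 ≤ 1 := by
  rw [useq, Nat.sub_self, Nat.nth_zero]
  exact Nat.sInf_le ⟨one_pos, Nat.coprime_one_left Q⟩

/-- Adding `Q` preserves coprimality, so consecutive terms differ by at most `Q`. -/
theorem useq_succ_le (hQ : 0 < Q) (n : ℕ) : useq Q (n + 1) ≤ useq Q n + Q := by
  obtain _ | i := n
  · exact Nat.le_add_right _ _
  · show Nat.nth _ (i + 1) ≤ Nat.nth _ i + Q
    by_contra! h
    obtain ⟨hpos, hcop⟩ := Nat.nth_mem_of_infinite (setOf_pos_coprime_infinite hQ) i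
    have := Nat.le_nth_of_lt_nth_succ h ⟨by omega, by simpa using hcop⟩
    omega

theorem useq_add_le (hQ : 0 < Q) (n j : ℕ) : useq Q (n + j) ≤ useq Q n + Q * j := by
  induction j with
  | zero => simp
  | succ j ih =>
    rw [← add_assoc]
    linarith [useq_succ_le hQ (n + j), mul_add Q j 1]

theorem useq_le_mul (hQ : 0 < Q) {n : ℕ} (hn : 1 ≤ n) : useq Q n ≤ Q * n := by
  have := useq_add_le hQ 1 (n - 1)
  rw [Nat.add_sub_cancel' hn] at this
  have : Q * (n - 1) + Q = Q * n := by
    rw [← Nat.mul_succ, Nat.succ_eq_add_one, Nat.sub_add_cancel hn]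
  linarith [useq_one_le (Q := Q)]

end useq

theorem prod_sub_prod_le_card_mul {ι : Type*} [DecidableEq ι] {s : Finset ι} {f g : ι → ℝ}
    {A d : ℝ} (hg : ∀ i ∈ s, 0 ≤ g i) (hgf : ∀ i ∈ s, g i ≤ f i) (hfA : ∀ i ∈ s, f i ≤ A)
    (hd : ∀ i ∈ s, f i - g i ≤ d) :
    ∏ i ∈ s, f i - ∏ i ∈ s, g i ≤ #s * d * A ^ (#s - 1) := by
  induction s using Finset.induction_on with
  | empty => simp
  | insert i s hi ih =>
    simp only [mem_insert, forall_eq_or_imp] at hg hgf hfA hd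
    have ih := ih hg.2 hgf.2 hfA.2 hd.2
    have hA : 0 ≤ A := hg.1.trans (hgf.1.trans hfA.1)
    have hprod : ∏ j ∈ s, g j ≤ ∏ j ∈ s, f j :=
      prod_le_prod hg.2 hgf.2
    have hgA : ∏ j ∈ s, g j ≤ A ^ #s :=
      (prod_le_prod hg.2 fun j hj => (hgf.2 j hj).trans (hfA.2 j hj)).trans_eq (prod_const A)
    have hAs : A * (#s * d * A ^ (#s - 1)) = #s * d * A ^ #s := by
      rcases Nat.eq_zero_or_pos #s with h | h
      · simp [h]
      · rw [← mul_pow_sub_one h.ne' A]; ring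
    rw [prod_insert hi, prod_insert hi, card_insert_of_notMem hi, Nat.add_sub_cancel]
    calc f i * ∏ j ∈ s, f j - g i * ∏ j ∈ s, g j
        = f i * (∏ j ∈ s, f j - ∏ j ∈ s, g j) + (f i - g i) * ∏ j ∈ s, g j := by ring
      _ ≤ A * (#s * d * A ^ (#s - 1)) + d * A ^ #s := by
        have hd0 : 0 ≤ d := (sub_nonneg.2 hgf.1).trans hd.1
        exact add_le_add (mul_le_mul hfA.1 ih (sub_nonneg.2 hprod) hA)
          (mul_le_mul hd.1 hgA (prod_nonneg hg.2) hd0)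
      _ = ((#s + 1 : ℕ) : ℝ) * d * A ^ #s := by rw [hAs]; push_cast; ring

theorem one_sub_div_log_le_one_sub_div_log {c x y : ℝ} (hc : 0 ≤ c) (hx : 1 < x) (hxy : x ≤ y) :
    1 - c / Real.log x ≤ 1 - c / Real.log y :=
  sub_le_sub_left (div_le_div_of_nonneg_left hc (Real.log_pos hx)
    (Real.log_le_log (by linarith) hxy)) 1

theorem one_sub_div_log_sub_le {c N x y : ℝ} (hc : 0 ≤ c) (hN : 1 < N) (hNx : N ≤ x)
    (hxy : x ≤ y) :
    (1 - c / Real.log y) - (1 - c / Real.log x) ≤ c * (y - x) / (N * Real.log N ^ 2) := by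
  have hx : 0 < x := by linarith
  have hlogN : 0 < Real.log N := Real.log_pos hN
  have hlogx : Real.log N ≤ Real.log x := Real.log_le_log (by linarith) hNx
  have hlogy : Real.log x ≤ Real.log y := Real.log_le_log hx hxy
  have hlog_sub : Real.log y - Real.log x ≤ (y - x) / N := by
    calc Real.log y - Real.log x = Real.log (y / x) := (Real.log_div (by linarith) hx.ne').symm
      _ ≤ y / x - 1 := Real.log_le_sub_one_of_pos (div_pos (by linarith) hx)
      _ = (y - x) / x := by field_simp
      _ ≤ (y - x) / N := div_le_div_of_nonneg_left (by linarith) (by linarith) hNx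
  calc (1 - c / Real.log y) - (1 - c / Real.log x)
      = c * (Real.log y - Real.log x) / (Real.log x * Real.log y) := by
        field_simp [(hlogN.trans_le hlogx).ne', (hlogN.trans_le (hlogx.trans hlogy)).ne']
        ring
    _ ≤ c * ((y - x) / N) / (Real.log N * Real.log N) := by
        gcongr
        · exact hlogN.le.trans hlogx
        · linarith
    _ = c * (y - x) / (N * Real.log N ^ 2) := by field_simp

theorem succ_pow_le_factorial_mul_choose (M k : ℕ) :
    ((k : ℝ) + 1) ^ M ≤ M ! * ((k + M).choose M : ℝ) := by
  have := Nat.pow_sub_le_descFactorial (k + M) M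
  rw [Nat.descFactorial_eq_factorial_mul_choose, show k + M + 1 - M = k + 1 by omega] at this
  exact_mod_cast this

theorem summable_succ_pow_mul_geometric (M : ℕ) {ρ : ℝ} (h0 : 0 ≤ ρ) (h1 : ρ < 1) :
    Summable fun k : ℕ => ((k : ℝ) + 1) ^ M * ρ ^ k :=
  .of_nonneg_of_le (fun k => by positivity)
    (fun k => mul_le_mul_of_nonneg_right (succ_pow_le_factorial_mul_choose M k) (by positivity))
    ((summable_choose_mul_geometric_of_norm_lt_one M (r := ρ)
      (by rwa [Real.norm_of_nonneg h0])).mul_left (M ! : ℝ) |>.congr fun k => by ring)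

theorem tsum_succ_pow_mul_geometric_le (M : ℕ) {ρ : ℝ} (h0 : 0 ≤ ρ) (h1 : ρ < 1) :
    ∑' k : ℕ, ((k : ℝ) + 1) ^ M * ρ ^ k ≤ M ! / (1 - ρ) ^ (M + 1) := by
  have hρ : ‖ρ‖ < 1 := by rwa [Real.norm_of_nonneg h0]
  calc ∑' k : ℕ, ((k : ℝ) + 1) ^ M * ρ ^ k
      ≤ ∑' k : ℕ, (M ! : ℝ) * ((k + M).choose M * ρ ^ k) :=
        Summable.tsum_le_tsum
          (fun k => by rw [← mul_assoc]; gcongr; exact succ_pow_le_factorial_mul_choose M k)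
          (summable_succ_pow_mul_geometric M h0 h1)
          ((summable_choose_mul_geometric_of_norm_lt_one M hρ).mul_left _)
    _ = M ! / (1 - ρ) ^ (M + 1) := by
        rw [tsum_mul_left, tsum_choose_mul_geometric_of_norm_lt_one M hρ, mul_one_div]

/-- Since `log² x = o(x)`, the factor `exp (-c k / log (a k))` eventually beats `k ^ -(M + 2)`. -/
theorem summable_succ_pow_mul_exp_neg_div_log (M : ℕ) {a c : ℝ} (ha : 1 ≤ a) (hc : 0 < c) :
    Summable fun k : ℕ => ((k : ℝ) + 1) ^ M * Real.exp (-(c * k / Real.log (a * k))) := by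
  have hak : Tendsto (fun k : ℕ => a * k) atTop atTop :=
    tendsto_natCast_atTop_atTop.const_mul_atTop (by linarith)
  have hlog_sq : ∀ᶠ k : ℕ in atTop, Real.log (a * k) ^ 2 ≤ c / (a * (M + 2)) * ‖a * k‖ :=
    ((Real.isLittleO_pow_log_id_atTop (n := 2)).comp_tendsto hak).def (by positivity)
      |>.mono fun k hk => (Real.le_norm_self _).trans hk
  refine summable_of_isBigO_nat (Real.summable_nat_pow_inv.2 one_lt_two) (.of_bound (2 ^ M) ?_)
  filter_upwards [hlog_sq, eventually_ge_atTop 2] with k hk hk2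
  have hk1 : (2 : ℝ) ≤ k := by exact_mod_cast hk2
  have hlogk : 0 < Real.log k := Real.log_pos (by linarith)
  have hlogk_le : Real.log k ≤ Real.log (a * k) := Real.log_le_log (by linarith) (by nlinarith)
  have hlogak : 0 < Real.log (a * k) := hlogk.trans_le hlogk_le
  have hk' : (M + 2) * Real.log (a * k) ^ 2 ≤ c * k := by
    rw [Real.norm_of_nonneg (by nlinarith), show c / (a * (M + 2)) * (a * k) = c * k / (M + 2) by
      field_simp, le_div_iff₀ (by positivity)] at hk
    linarith
  have hexp : Real.exp (-(c * k / Real.log (a * k))) ≤ ((k : ℝ) ^ (M + 2))⁻¹ := by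
    have : (M + 2) * Real.log k ≤ c * k / Real.log (a * k) := by
      rw [le_div_iff₀ hlogak]
      nlinarith [mul_le_mul_of_nonneg_right hlogk_le hlogak.le]
    calc Real.exp (-(c * k / Real.log (a * k))) ≤ Real.exp (-((M + 2 : ℕ) * Real.log k)) := by
          push_cast; gcongr
      _ = ((k : ℝ) ^ (M + 2))⁻¹ := by
          rw [Real.exp_neg, Real.exp_nat_mul, Real.exp_log (by linarith)]
  rw [Real.norm_of_nonneg (by positivity), Real.norm_of_nonneg (by positivity)]
  calc ((k : ℝ) + 1) ^ M * Real.exp (-(c * k / Real.log (a * k)))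
      ≤ (2 * k) ^ M * ((k : ℝ) ^ (M + 2))⁻¹ := by gcongr; linarith
    _ = 2 ^ M * ((k : ℝ) ^ 2)⁻¹ := by field_simp; ring

noncomputable def logFactor (Q : ℕ) (c : ℝ) (i : ℕ) : ℝ :=
  1 - c / Real.log (useq Q i)

noncomputable def H2Term (Q : ℕ) (c : ℝ) (m n k : ℕ) : ℝ :=
  ((useq Q (n + (k + 2)) - useq Q n : ℝ) ^ m / Real.log (useq Q (n + (k + 2)))) *
    (∏ j ∈ Icc 1 (k + 1), logFactor Q c (n + j) - logFactor Q c n ^ (k + 1))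

theorem H2_eq_tsum_H2Term (Q : ℕ) (c : ℝ) (m n : ℕ) : H2 Q c m n = ∑' k, H2Term Q c m n k :=
  rfl

section H2Bounds

variable {Q : ℕ} {c : ℝ} {n : ℕ}

theorem natCast_le_useq (hQ : 0 < Q) (i : ℕ) : (i : ℝ) ≤ useq Q i :=
  Nat.cast_le.2 (le_useq hQ i)

theorem logFactor_le_of_useq_le (hQ : 0 < Q) (hc : 0 ≤ c) {i : ℕ} (hi : 2 ≤ i) {y : ℝ}
    (hy : (useq Q i : ℝ) ≤ y) : logFactor Q c i ≤ 1 - c / Real.log y :=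
  one_sub_div_log_le_one_sub_div_log hc
    ((by exact_mod_cast hi : (1 : ℝ) < i).trans_le (natCast_le_useq hQ i)) hy

theorem logFactor_mono (hQ : 0 < Q) (hc : 0 ≤ c) {i j : ℕ} (hi : 2 ≤ i) (hij : i ≤ j) :
    logFactor Q c i ≤ logFactor Q c j :=
  logFactor_le_of_useq_le hQ hc hi (Nat.cast_le.2 (useq_monotone hQ hij))

theorem logFactor_nonneg (hQ : 0 < Q) {i : ℕ} (hi : 2 ≤ i) (hci : c ≤ Real.log i) :
    0 ≤ logFactor Q c i := by
  have hlog : Real.log i ≤ Real.log (useq Q i) :=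
    Real.log_le_log (by positivity) (natCast_le_useq hQ i)
  have hlogi : 0 < Real.log i := Real.log_pos (by exact_mod_cast hi)
  rw [logFactor, sub_nonneg, div_le_one (hlogi.trans_le hlog)]
  linarith

theorem logFactor_add_sub_le (hQ : 0 < Q) (hc : 0 ≤ c) (hn : 2 ≤ n) (j : ℕ) :
    logFactor Q c (n + j) - logFactor Q c n ≤ c * (Q * j) / (n * Real.log n ^ 2) := by
  have hstep : (useq Q (n + j) : ℝ) - useq Q n ≤ Q * j := by
    rw [sub_le_iff_le_add']; exact_mod_cast useq_add_le hQ n j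
  refine (one_sub_div_log_sub_le hc (by exact_mod_cast hn) (natCast_le_useq hQ n)
    (Nat.cast_le.2 (useq_monotone hQ (Nat.le_add_right n j)))).trans ?_
  gcongr

theorem pow_logFactor_le_prod (hQ : 0 < Q) (hc : 0 ≤ c) (hn : 2 ≤ n) (hcn : c ≤ Real.log n)
    (k : ℕ) : logFactor Q c n ^ (k + 1) ≤ ∏ j ∈ Icc 1 (k + 1), logFactor Q c (n + j) := by
  simpa using prod_le_prod (s := Icc 1 (k + 1)) (fun _ _ => logFactor_nonneg hQ hn hcn)
    fun j _ => logFactor_mono hQ hc hn (Nat.le_add_right n j)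

theorem prod_logFactor_sub_pow_le (hQ : 0 < Q) (hc : 0 ≤ c) (hn : 2 ≤ n)
    (hcn : c ≤ Real.log n) (k : ℕ) :
    ∏ j ∈ Icc 1 (k + 1), logFactor Q c (n + j) - logFactor Q c n ^ (k + 1) ≤
      (k + 1) * (c * (Q * (k + 1)) / (n * Real.log n ^ 2)) * logFactor Q c (n + (k + 1)) ^ k := by
  have h := prod_sub_prod_le_card_mul (s := Icc 1 (k + 1)) (g := fun _ => logFactor Q c n)
    (f := fun j => logFactor Q c (n + j)) (A := logFactor Q c (n + (k + 1)))
    (d := c * (Q * (k + 1)) / (n * Real.log n ^ 2))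
    (fun _ _ => logFactor_nonneg hQ hn hcn)
    (fun j _ => logFactor_mono hQ hc hn (Nat.le_add_right n j))
    (fun j hj => logFactor_mono hQ hc (by omega) (by simp at hj; omega))
    (fun j hj => (logFactor_add_sub_le hQ hc hn j).trans (by
      have : (j : ℝ) ≤ k + 1 := by simp at hj; exact_mod_cast hj.2
      gcongr))
  simpa using h

theorem logFactor_pow_le (hQ : 0 < Q) (hc : 0 ≤ c) (hn : 2 ≤ n) (hQn : 3 * Q ≤ n)
    (hcn : c ≤ Real.log n) (k : ℕ) :
    logFactor Q c (n + (k + 1)) ^ k ≤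
      (1 - c / (2 * Real.log n)) ^ k + Real.exp (-(c * k / Real.log (3 * Q * k))) := by
  have h0 : 0 ≤ logFactor Q c (n + (k + 1)) :=
    logFactor_nonneg hQ (by omega)
      (hcn.trans (Real.log_le_log (by positivity) (by simp; positivity)))
  have hlogn : 0 < Real.log n := Real.log_pos (by exact_mod_cast hn)
  have hstep : (useq Q (n + (k + 1)) : ℝ) ≤ Q * n + Q * (k + 1) := by
    exact_mod_cast (useq_add_le hQ n (k + 1)).trans
      (Nat.add_le_add_right (useq_le_mul hQ (by omega)) _)
  rcases le_or_gt k n with hkn | hnk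
  · have hρ : logFactor Q c (n + (k + 1)) ≤ 1 - c / (2 * Real.log n) := by
      rw [show 2 * Real.log n = Real.log (n ^ 2) by rw [Real.log_pow]; norm_num]
      refine logFactor_le_of_useq_le hQ hc (by omega) (hstep.trans ?_)
      have hk : (k : ℝ) + 1 ≤ 2 * n := by
        have : (1 : ℝ) ≤ n := by exact_mod_cast (by omega : 1 ≤ n)
        have : (k : ℝ) ≤ n := by exact_mod_cast hkn
        linarith
      calc (Q : ℝ) * n + Q * (k + 1) ≤ 3 * Q * n := by nlinarith [(Nat.cast_nonneg Q : (0 : ℝ) ≤ Q)]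
        _ ≤ n * n := by gcongr; exact_mod_cast hQn
        _ = n ^ 2 := (sq _).symm
    exact le_add_of_le_of_nonneg (pow_le_pow_left₀ h0 hρ k) (Real.exp_nonneg _)
  · have hk : (n : ℝ) + 1 ≤ k := by exact_mod_cast hnk
    have hexp : logFactor Q c (n + (k + 1)) ≤ Real.exp (-(c / Real.log (3 * Q * k))) := by
      refine (logFactor_le_of_useq_le hQ hc (y := 3 * Q * k) (by omega) (hstep.trans ?_)).trans ?_
      · nlinarith [(Nat.cast_nonneg Q : (0 : ℝ) ≤ Q)]
      · linarith [Real.add_one_le_exp (-(c / Real.log (3 * Q * k)))]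
    have hρ : 0 ≤ 1 - c / (2 * Real.log n) := by
      rw [sub_nonneg, div_le_one (by positivity)]; linarith
    refine le_add_of_nonneg_of_le (pow_nonneg hρ k) ((pow_le_pow_left₀ h0 hexp k).trans_eq ?_)
    rw [← Real.exp_nat_mul]
    ring_nf

theorem H2Term_nonneg (hQ : 0 < Q) (hc : 0 ≤ c) (hn : 2 ≤ n) (hcn : c ≤ Real.log n)
    (m k : ℕ) : 0 ≤ H2Term Q c m n k := by
  have hgap : 0 ≤ (useq Q (n + (k + 2)) - useq Q n : ℝ) :=
    sub_nonneg.2 (Nat.cast_le.2 (useq_monotone hQ (by omega)))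
  exact mul_nonneg (by positivity) (sub_nonneg.2 (pow_logFactor_le_prod hQ hc hn hcn k))

theorem H2Term_le (hQ : 0 < Q) (hc : 0 ≤ c) (hn : 2 ≤ n) (hcn : c ≤ Real.log n) (m k : ℕ) :
    H2Term Q c m n k ≤ 2 ^ m * c * Q ^ (m + 1) / (n * Real.log n ^ 3) *
      ((k + 1) ^ (m + 2) * logFactor Q c (n + (k + 1)) ^ k) := by
  have hlogn : 0 < Real.log n := Real.log_pos (by exact_mod_cast hn)
  have hgap : 0 ≤ (useq Q (n + (k + 2)) - useq Q n : ℝ) :=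
    sub_nonneg.2 (Nat.cast_le.2 (useq_monotone hQ (by omega)))
  have hgap_le : (useq Q (n + (k + 2)) - useq Q n : ℝ) ≤ Q * (k + 2) := by
    rw [sub_le_iff_le_add']; exact_mod_cast useq_add_le hQ n (k + 2)
  have hlog : Real.log n ≤ Real.log (useq Q (n + (k + 2))) :=
    Real.log_le_log (by positivity) ((Nat.cast_le.2 (by omega)).trans (natCast_le_useq hQ _))
  have hfront : (useq Q (n + (k + 2)) - useq Q n : ℝ) ^ m / Real.log (useq Q (n + (k + 2))) ≤
      (Q * (k + 2)) ^ m / Real.log n := by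
    gcongr
  have ha : 0 ≤ logFactor Q c (n + (k + 1)) := logFactor_nonneg hQ (by omega)
    (hcn.trans (Real.log_le_log (by positivity) (by simp; positivity)))
  calc H2Term Q c m n k
      ≤ (Q * (k + 2)) ^ m / Real.log n * ((k + 1) * (c * (Q * (k + 1)) / (n * Real.log n ^ 2)) *
          logFactor Q c (n + (k + 1)) ^ k) :=
        mul_le_mul hfront (prod_logFactor_sub_pow_le hQ hc hn hcn k)
          (sub_nonneg.2 (pow_logFactor_le_prod hQ hc hn hcn k)) (by positivity)
    _ = c * Q ^ (m + 1) / (n * Real.log n ^ 3) *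
          ((k + 2) ^ m * (k + 1) ^ 2 * logFactor Q c (n + (k + 1)) ^ k) := by
        rw [mul_pow]; field_simp; ring
    _ ≤ c * Q ^ (m + 1) / (n * Real.log n ^ 3) *
          ((2 * (k + 1)) ^ m * (k + 1) ^ 2 * logFactor Q c (n + (k + 1)) ^ k) := by
        gcongr; linarith
    _ = _ := by rw [mul_pow]; ring

theorem H2_le (hQ : 0 < Q) (hc : 0 < c) (hn : 2 ≤ n) (hQn : 3 * Q ≤ n)
    (hcn : c ≤ Real.log n) (m : ℕ) :
    H2 Q c m n ≤ 2 ^ m * c * Q ^ (m + 1) / (n * Real.log n ^ 3) *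
      ((m + 2)! * (2 * Real.log n / c) ^ (m + 3) +
        ∑' k : ℕ, ((k : ℝ) + 1) ^ (m + 2) * Real.exp (-(c * k / Real.log (3 * Q * k)))) := by
  set ρ := 1 - c / (2 * Real.log n) with hρ
  set C := 2 ^ m * c * Q ^ (m + 1) / (n * Real.log n ^ 3)
  have hlogn : 0 < Real.log n := Real.log_pos (by exact_mod_cast hn)
  have hC : 0 ≤ C := by positivity
  have hρ0 : 0 ≤ ρ := by rw [hρ, sub_nonneg, div_le_one (by positivity)]; linarith
  have hρ1 : ρ < 1 := by rw [hρ]; linarith [div_pos hc (by positivity : 0 < 2 * Real.log n)]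
  have hgeom := summable_succ_pow_mul_geometric (m + 2) hρ0 hρ1
  have htail := summable_succ_pow_mul_exp_neg_div_log (m + 2) (a := 3 * Q)
    (by linarith [(Nat.one_le_cast.2 hQ : (1 : ℝ) ≤ Q)]) hc
  have hterm : ∀ k : ℕ, H2Term Q c m n k ≤ C * (((k : ℝ) + 1) ^ (m + 2) * ρ ^ k +
      ((k : ℝ) + 1) ^ (m + 2) * Real.exp (-(c * k / Real.log (3 * Q * k)))) := fun k =>
    (H2Term_le hQ hc.le hn hcn m k).trans <| mul_le_mul_of_nonneg_left
      (by rw [← mul_add]; gcongr; exact logFactor_pow_le hQ hc.le hn hQn hcn k) hC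
  have hsum : Summable (H2Term Q c m n) := .of_nonneg_of_le (H2Term_nonneg hQ hc.le hn hcn m)
    hterm ((hgeom.add htail).mul_left C)
  rw [H2_eq_tsum_H2Term]
  calc ∑' k, H2Term Q c m n k
      ≤ ∑' k : ℕ, C * (((k : ℝ) + 1) ^ (m + 2) * ρ ^ k +
          ((k : ℝ) + 1) ^ (m + 2) * Real.exp (-(c * k / Real.log (3 * Q * k)))) :=
        hsum.tsum_le_tsum hterm ((hgeom.add htail).mul_left C)
    _ = C * (∑' k : ℕ, ((k : ℝ) + 1) ^ (m + 2) * ρ ^ k +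
          ∑' k : ℕ, ((k : ℝ) + 1) ^ (m + 2) * Real.exp (-(c * k / Real.log (3 * Q * k)))) := by
        rw [tsum_mul_left, hgeom.tsum_add htail]
    _ ≤ C * ((m + 2)! / (1 - ρ) ^ (m + 2 + 1) +
          ∑' k : ℕ, ((k : ℝ) + 1) ^ (m + 2) * Real.exp (-(c * k / Real.log (3 * Q * k)))) := by
        gcongr; exact tsum_succ_pow_mul_geometric_le (m + 2) hρ0 hρ1
    _ = _ := by
        rw [hρ, sub_sub_cancel, div_eq_mul_inv (_ : ℝ) ((c / _) ^ _), ← inv_pow, inv_div]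

theorem H2_isBigO_log_pow_div (hQ : 0 < Q) (hc : 0 < c) (m : ℕ) :
    (fun n : ℕ => H2 Q c m n) =O[atTop] fun n : ℕ => Real.log n ^ m / n := by
  set G := ∑' k : ℕ, ((k : ℝ) + 1) ^ (m + 2) * Real.exp (-(c * k / Real.log (3 * Q * k)))
  have hG : 0 ≤ G := tsum_nonneg fun k => by positivity
  refine .of_bound (2 ^ m * c * Q ^ (m + 1) * ((m + 2)! * (2 / c) ^ (m + 3) + G)) ?_
  filter_upwards [eventually_ge_atTop (max 2 (3 * Q)),
    (Real.tendsto_log_atTop.comp tendsto_natCast_atTop_atTop).eventually_ge_atTop (max c 1)]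
    with n hn hlogn
  simp only [max_le_iff, Function.comp_apply] at hn hlogn
  have hL : 1 ≤ Real.log n := hlogn.2
  have hH2 : 0 ≤ H2 Q c m n :=
    tsum_nonneg (H2Term_nonneg hQ hc.le hn.1 hlogn.1 m)
  rw [Real.norm_of_nonneg hH2, Real.norm_of_nonneg (by positivity)]
  have hGL : G / Real.log n ^ 3 ≤ G * Real.log n ^ m :=
    (div_le_self hG (one_le_pow₀ hL)).trans (le_mul_of_one_le_right hG (one_le_pow₀ hL))
  calc H2 Q c m n
      ≤ 2 ^ m * c * Q ^ (m + 1) / (n * Real.log n ^ 3) *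
          ((m + 2)! * (2 * Real.log n / c) ^ (m + 3) + G) := H2_le hQ hc hn.1 hn.2 hlogn.1 m
    _ = 2 ^ m * c * Q ^ (m + 1) / n *
          ((m + 2)! * (2 / c) ^ (m + 3) * Real.log n ^ m + G / Real.log n ^ 3) := by
        field_simp; ring
    _ ≤ 2 ^ m * c * Q ^ (m + 1) / n *
          ((m + 2)! * (2 / c) ^ (m + 3) * Real.log n ^ m + G * Real.log n ^ m) := by
        gcongr
    _ = _ := by ring

end H2Bounds

theorem H2_isBigO_general (Q : ℕ) (hQ : 2 ≤ Q) (c : ℝ) (hc : 0 < c) (m : ℕ)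
    (ε : ℝ) (hε : 0 < ε) :
    (fun n : ℕ => H2 Q c m n) =O[Filter.atTop]
      fun n : ℕ => (Real.log n) ^ ((m : ℝ) + ε) / (n : ℝ) := by
  refine (H2_isBigO_log_pow_div (by omega) hc m).trans (.of_bound 1 ?_)
  filter_upwards [(Real.tendsto_log_atTop.comp tendsto_natCast_atTop_atTop).eventually_ge_atTop 1]
    with n hn
  rw [one_mul, Real.norm_of_nonneg (by positivity), Real.norm_of_nonneg (by positivity),
    ← Real.rpow_natCast]
  gcongr
  linarith

/-- `H₂^m(n) = O((log n)^{m+ε} / n)` for every `ε > 0`. -/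
theorem H2_isBigO (Q : ℕ) (hQ : 2 ≤ Q) (c : ℝ) (hc : 0 < c) (m : ℕ) (hm : 1 ≤ m)
    (ε : ℝ) (hε : 0 < ε) :
    (fun n : ℕ => H2 Q c m n) =O[Filter.atTop]
      fun n : ℕ => (Real.log n) ^ ((m : ℝ) + ε) / (n : ℝ) :=
  H2_isBigO_general Q hQ c hc m ε hε
end
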